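/- Let A ⋊_α^σ G be a category crossed product with each A_e commutative. Then A is maximal commutative in A ⋊_α^σ G (i.e. A equals its own commutant) if and only if for every object e, every nonidentity s ∈ G_e, and every nonzero a_s ∈ A_e, there exists a ∈ A_e with a_s (σ_s(a) − a) ≠ 0. -/

import Mathlib

open CategoryTheory

/-- The type of morphisms of a category `G`, bundled with domain and codomain. -/
abbrev CMor (G : Type*) [Category G] := Σ e f : G, e ⟶ f

/-- Transport along an equality of objects, as a ring homomorphism. -/
def castRH {G : Type*} (A : G → Type*) [∀ e, Ring (A e)]
    {e f : G} (h : e = f) : A e →+* A f := by subst h; exact RingHom.id _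

/-- The carrier of the category crossed product `A ⋊_α^σ G`: finitely supported
formal sums `Σ_s a_s u_s` with `a_s ∈ A_{c(s)}`. -/
abbrev CP {G : Type*} [Category G] (A : G → Type*) [∀ e, Ring (A e)] :=
  Π₀ p : CMor G, A p.2.1

open Classical in
/-- The multiplication of the category crossed product:
`(a u_s)(b u_t) = a σ_s(b) α(s,t) u_{st}` when `d(s) = c(t)`, else `0`. -/
noncomputable def catMul {G : Type*} [Category G] {A : G → Type*} [∀ e, Ring (A e)]
    (σ : ∀ e f : G, (e ⟶ f) → (A e →+* A f))
    (α : ∀ e f g : G, (f ⟶ g) → (e ⟶ f) → A g)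
    (x y : CP A) : CP A :=
  x.sum fun p a => y.sum fun q b =>
    if h : q.2.1 = p.1 then
      DFinsupp.single (⟨q.1, p.2.1, (q.2.2 ≫ eqToHom h) ≫ p.2.2⟩ : CMor G)
        (a * σ p.1 p.2.1 p.2.2 (castRH A h b) * α q.1 p.1 p.2.1 p.2.2 (q.2.2 ≫ eqToHom h))
    else 0

open Classical in
/-- `a u_s`, the formal sum supported on a single morphism. -/
noncomputable def catSingle {G : Type*} [Category G] {A : G → Type*} [∀ e, Ring (A e)]
    (p : CMor G) (a : A p.2.1) : CP A := DFinsupp.single p a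

/-! Multiplying by `a u_e` only rescales coefficients: `(x · a u_e)_r = x_r σ_r(a)` when
`d(r) = e`, and `(a u_e · x)_r = a x_r` when `c(r) = e` (both vanish otherwise). Hence `x` commutes
with `A` exactly when it vanishes off the loops and every loop coefficient satisfies
`x_s σ_s(a) = a x_s`, i.e. `x_s (σ_s(a) - a) = 0`. The condition of the theorem forbids such a
nonzero coefficient on a nonidentity loop, and a forbidden `b` on `s` gives the element `b u_s` of
the commutant outside `A`. -/

@[simp] lemma castRH_rfl {G : Type*} (A : G → Type*) [∀ e, Ring (A e)] {e : G} :
    castRH A (rfl : e = e) = RingHom.id _ := rfl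

theorem DFinsupp.sum_single_eq_mapRange {ι : Type*} {β₁ β₂ : ι → Type*} [∀ i, Zero (β₁ i)]
    [∀ i, AddCommMonoid (β₂ i)] [∀ i (x : β₁ i), Decidable (x ≠ 0)] [DecidableEq ι]
    (x : Π₀ i, β₁ i) (c : ∀ i, β₁ i → β₂ i) (hc : ∀ i, c i 0 = 0) :
    (x.sum fun i a => DFinsupp.single i (c i a)) = DFinsupp.mapRange c hc x := by
  classical
  rw [← DFinsupp.sum_single (f := DFinsupp.mapRange c hc x), DFinsupp.sum_mapRange_index]
  exact fun i => DFinsupp.single_zero i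

lemma CMor.mk_ne_id {G : Type*} [Category G] {e : G} {s : e ⟶ e} (hs : s ≠ 𝟙 e) (e' : G) :
    (⟨e, e, s⟩ : CMor G) ≠ ⟨e', e', 𝟙 e'⟩ := by
  rintro ⟨⟩
  exact hs rfl

section CrossedProduct

variable {G : Type*} [Category G] {A : G → Type*} [∀ e, Ring (A e)]
  (σ : ∀ e f : G, (e ⟶ f) → (A e →+* A f)) (α : ∀ e f g : G, (f ⟶ g) → (e ⟶ f) → A g)

open Classical in
lemma catMul_catSingle_id_apply (hα1r : ∀ (e f : G) (s : e ⟶ f), α e e f s (𝟙 e) = 1)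
    (x : CP A) (e : G) (a : A e) (r : CMor G) :
    catMul σ α x (catSingle ⟨e, e, 𝟙 e⟩ a) r
      = if h : e = r.1 then x r * σ r.1 r.2.1 r.2.2 (castRH A h a) else 0 := by
  calc catMul σ α x (catSingle ⟨e, e, 𝟙 e⟩ a) r
      = (x.sum fun p ap => DFinsupp.single p
          (if h : e = p.1 then ap * σ p.1 p.2.1 p.2.2 (castRH A h a) else 0)) r := by
        unfold catMul catSingle
        congr 2
        funext ⟨d, c, m⟩ ap
        rw [DFinsupp.sum_single_index (by split <;> simp)]
        by_cases h : e = d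
        · subst h
          simp only [↓reduceDIte, eqToHom_refl, castRH_rfl, RingHom.id_apply, Category.comp_id,
            hα1r, mul_one]
          rw [Category.comp_id, Category.id_comp]
        · simp [h]
    _ = _ := by
        rw [DFinsupp.sum_single_eq_mapRange _ _ (fun p => by split <;> simp),
          DFinsupp.mapRange_apply]

open Classical in
lemma catSingle_id_catMul_apply (hσ1 : ∀ e : G, σ e e (𝟙 e) = RingHom.id (A e))
    (hα1l : ∀ (e f : G) (s : e ⟶ f), α e f f (𝟙 f) s = 1)
    (x : CP A) (e : G) (a : A e) (r : CMor G) :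
    catMul σ α (catSingle ⟨e, e, 𝟙 e⟩ a) x r
      = if h : r.2.1 = e then castRH A h.symm a * x r else 0 := by
  calc catMul σ α (catSingle ⟨e, e, 𝟙 e⟩ a) x r
      = (x.sum fun q bq => DFinsupp.single q
          (if h : q.2.1 = e then castRH A h.symm a * bq else 0)) r := by
        unfold catMul catSingle
        rw [DFinsupp.sum_single_index (DFinsupp.sum_eq_zero fun q => by split <;> simp)]
        congr 2
        funext ⟨d, c, m⟩ bq
        by_cases h : c = e
        · subst h
          simp only [↓reduceDIte, eqToHom_refl, hσ1, castRH_rfl, RingHom.id_apply,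
            Category.comp_id, hα1l, mul_one]
          rw [Category.comp_id, Category.comp_id]
        · simp [h]
    _ = _ := by
        rw [DFinsupp.sum_single_eq_mapRange _ _ (fun q => by split <;> simp),
          DFinsupp.mapRange_apply]

def IsCommutantCoeffs (x : CP A) : Prop :=
  (∀ (d c : G) (m : d ⟶ c), d ≠ c → x ⟨d, c, m⟩ = 0) ∧
    ∀ (e : G) (s : e ⟶ e) (a : A e), x ⟨e, e, s⟩ * σ e e s a = a * x ⟨e, e, s⟩

theorem commutes_catSingle_id_iff (hσ1 : ∀ e : G, σ e e (𝟙 e) = RingHom.id (A e))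
    (hα1r : ∀ (e f : G) (s : e ⟶ f), α e e f s (𝟙 e) = 1)
    (hα1l : ∀ (e f : G) (s : e ⟶ f), α e f f (𝟙 f) s = 1) (x : CP A) :
    (∀ (e : G) (a : A e),
        catMul σ α x (catSingle ⟨e, e, 𝟙 e⟩ a) = catMul σ α (catSingle ⟨e, e, 𝟙 e⟩ a) x) ↔
      IsCommutantCoeffs σ x := by
  simp only [IsCommutantCoeffs, DFinsupp.ext_iff, catMul_catSingle_id_apply σ α hα1r,
    catSingle_id_catMul_apply σ α hσ1 hα1l]
  constructor
  · intro h
    refine ⟨fun d c m hdc => ?_, fun e s a => by simpa using h e a ⟨e, e, s⟩⟩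
    simpa [Ne.symm hdc] using (h c 1 ⟨d, c, m⟩).symm
  · rintro ⟨hoff, hloop⟩ e a ⟨d, c, m⟩
    rcases eq_or_ne d c with rfl | hdc
    · by_cases he : e = d
      · subst he
        simpa using hloop e m a
      · simp [he, Ne.symm he]
    · simp [hoff d c m hdc]

lemma isCommutantCoeffs_catSingle {e : G} {s : e ⟶ e} {b : A e}
    (hb : ∀ a, b * σ e e s a = a * b) : IsCommutantCoeffs σ (catSingle ⟨e, e, s⟩ b) := by
  classical
  refine ⟨fun d c m hdc => DFinsupp.single_eq_of_ne (by rintro ⟨⟩; exact hdc rfl),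
    fun e' s' a => ?_⟩
  by_cases h : (⟨e, e, s⟩ : CMor G) = ⟨e', e', s'⟩
  · cases h
    simpa [catSingle] using hb a
  · rw [catSingle, DFinsupp.single_eq_of_ne (Ne.symm h), zero_mul, mul_zero]

end CrossedProduct

theorem maximal_commutative_iff_general
    {G : Type*} [CategoryTheory.Category G] {A : G → Type*} [∀ e, CommRing (A e)]
    (σ : ∀ e f : G, (e ⟶ f) → (A e →+* A f))
    (α : ∀ e f g : G, (f ⟶ g) → (e ⟶ f) → A g)
    (hσ1 : ∀ e : G, σ e e (𝟙 e) = RingHom.id (A e))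
    (hα1r : ∀ (e f : G) (s : e ⟶ f), α e e f s (𝟙 e) = 1)
    (hα1l : ∀ (e f : G) (s : e ⟶ f), α e f f (𝟙 f) s = 1) :
    (∀ x : CP A,
        (∀ (e : G) (a : A e),
          catMul σ α x (catSingle (A := A) ⟨e, e, 𝟙 e⟩ a)
            = catMul σ α (catSingle (A := A) ⟨e, e, 𝟙 e⟩ a) x) →
        ∀ p : CMor G, (∀ e : G, p ≠ ⟨e, e, 𝟙 e⟩) → x p = 0) ↔
      (∀ (e : G) (s : e ⟶ e), s ≠ 𝟙 e → ∀ b : A e, b ≠ 0 →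
        ∃ a : A e, b * (σ e e s a - a) ≠ 0) := by
  simp only [commutes_catSingle_id_iff σ α hσ1 hα1r hα1l]
  constructor
  · intro hmax e s hs b hb
    by_contra! hfix
    have hb_comm (a : A e) : b * σ e e s a = a * b := by
      rw [← sub_eq_zero, mul_comm a, ← mul_sub, hfix]
    simpa [catSingle, hb] using hmax _ (isCommutantCoeffs_catSingle σ hb_comm) _ (CMor.mk_ne_id hs)
  · rintro hcond x ⟨hoff, hloop⟩ ⟨d, c, m⟩ hp
    rcases eq_or_ne d c with rfl | hdc
    · by_contra hx
      obtain ⟨a, ha⟩ := hcond d m (fun hm => hp d (hm ▸ rfl)) _ hx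
      exact ha (by rw [mul_sub, hloop, mul_comm, sub_self])
    · exact hoff d c m hdc

/-- if each `A_e` is commutative, then `A` is maximal commutative
in `A ⋊_α^σ G` (its commutant is contained in `A`) iff for every object `e`,
every nonidentity `s ∈ G_e` and every nonzero `a_s ∈ A_e` there is `a ∈ A_e`
with `a_s (σ_s(a) - a) ≠ 0`. -/
theorem maximal_commutative_iff
    {G : Type*} [CategoryTheory.Category G] {A : G → Type*} [∀ e, CommRing (A e)]
    (σ : ∀ e f : G, (e ⟶ f) → (A e →+* A f))
    (α : ∀ e f g : G, (f ⟶ g) → (e ⟶ f) → A g)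
    (hσ1 : ∀ e : G, σ e e (𝟙 e) = RingHom.id (A e))
    (hα1r : ∀ (e f : G) (s : e ⟶ f), α e e f s (𝟙 e) = 1)
    (hα1l : ∀ (e f : G) (s : e ⟶ f), α e f f (𝟙 f) s = 1)
    (hcoc : ∀ (e f g h : G) (s : g ⟶ h) (t : f ⟶ g) (r : e ⟶ f),
      α f g h s t * α e f h (t ≫ s) r = σ g h s (α e f g t r) * α e g h s (r ≫ t))
    (htw : ∀ (e f g : G) (s : f ⟶ g) (t : e ⟶ f) (a : A e),
      σ f g s (σ e f t a) * α e f g s t = α e f g s t * σ e g (t ≫ s) a) :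
    (∀ x : CP A,
        (∀ (e : G) (a : A e),
          catMul σ α x (catSingle (A := A) ⟨e, e, 𝟙 e⟩ a)
            = catMul σ α (catSingle (A := A) ⟨e, e, 𝟙 e⟩ a) x) →
        ∀ p : CMor G, (∀ e : G, p ≠ ⟨e, e, 𝟙 e⟩) → x p = 0) ↔
      (∀ (e : G) (s : e ⟶ e), s ≠ 𝟙 e → ∀ b : A e, b ≠ 0 →
        ∃ a : A e, b * (σ e e s a - a) ≠ 0) :=
  maximal_commutative_iff_general σ α hσ1 hα1r hα1l
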